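/- For n ≥ 2, the number of permutations of {1,...,n} containing the consecutive pattern (i, i+1, x) at adjacent positions where x < i+1 (i.e., positions t, t+1, t+2 with π(t) = i, π(t+1) = i+1, π(t+2) < i+1, using convention π(n+1) = n+1) equals (i-1)·(n-2)!, for each fixed 1 ≤ i ≤ n-1. -/

import Mathlib

/-!
An occurrence of the pattern is determined by the position `p` of `i` and the value `x < i - 1`
that follows `i + 1`: the end marker `n + 1` can never follow, and `x = i - 1` is taken by `i`.
For each of the `(n - 2) (i - 1)` choices of `(p, x)` the permutation is prescribed at three
places, which leaves `(n - 3)!` permutations, and distinct choices give disjoint sets.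
-/

/-- Value of the permutation at position `k ∈ [1,n]`, with values in `[1,n]`,
and the convention that positions outside `[1,n]` (in particular `n+1`) get value `n+1`. -/
def pval (n : ℕ) (π : Equiv.Perm (Fin n)) (k : ℕ) : ℕ :=
  if h : k - 1 < n ∧ 1 ≤ k then ((π ⟨k - 1, h.1⟩ : Fin n) : ℕ) + 1 else n + 1

open Equiv Function Nat

section PermCount

variable {α ι κ : Type*} [Fintype α] [DecidableEq α] [Fintype ι]

theorem Equiv.Perm.exists_forall_apply_eq {f g : ι → α} (hf : Injective f)
    (hg : Injective g) : ∃ π₀ : Perm α, ∀ j, π₀ (f j) = g j := by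
  let e : {x // x ∈ Set.range f} ≃ {x // x ∈ Set.range g} :=
    (Equiv.ofInjective f hf).symm.trans (Equiv.ofInjective g hg)
  refine ⟨e.extendSubtype, fun j => ?_⟩
  rw [e.extendSubtype_apply_of_mem _ ⟨j, rfl⟩]
  simp [e]

theorem Equiv.Perm.card_forall_apply_eq_self {f : ι → α} (hf : Injective f) :
    Nat.card {σ : Perm α // ∀ j, σ (f j) = f j} = (Fintype.card α - Fintype.card ι)! := by
  have hfix : {σ : Perm α // ∀ j, σ (f j) = f j} ≃
      {σ : Perm α // ∀ a, ¬(a ∉ Set.range f) → σ a = a} :=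
    Equiv.subtypeEquivRight fun σ => by simp
  rw [Nat.card_congr (hfix.trans (Perm.subtypeEquivSubtypePerm _).symm), Nat.card_perm,
    Nat.card_eq_fintype_card, Fintype.card_subtype_compl, Set.card_range_of_injective hf]

theorem Equiv.Perm.card_forall_apply_eq {f g : ι → α} (hf : Injective f)
    (hg : Injective g) :
    Nat.card {π : Perm α // ∀ j, π (f j) = g j} = (Fintype.card α - Fintype.card ι)! := by
  obtain ⟨π₀, hπ₀⟩ := Perm.exists_forall_apply_eq hf hg
  rw [← Perm.card_forall_apply_eq_self hf]
  refine Nat.card_congr (Equiv.subtypeEquiv (Equiv.mulLeft π₀⁻¹) fun π => ?_)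
  simp [Equiv.symm_apply_eq, hπ₀]

theorem Equiv.Perm.card_exists_forall_apply_eq [Fintype κ] {f g : κ → ι → α}
    (hf : ∀ q, Injective (f q)) (hg : ∀ q, Injective (g q))
    (hunique : ∀ (π : Perm α) q q',
      (∀ j, π (f q j) = g q j) → (∀ j, π (f q' j) = g q' j) → q = q') :
    Nat.card {π : Perm α // ∃ q, ∀ j, π (f q j) = g q j} =
      Fintype.card κ * (Fintype.card α - Fintype.card ι)! := by
  have hbij : Bijective fun x : Σ q, {π : Perm α // ∀ j, π (f q j) = g q j} =>
      (⟨x.2, x.1, x.2.2⟩ : {π : Perm α // ∃ q, ∀ j, π (f q j) = g q j}) := by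
    refine ⟨?_, fun ⟨π, q, h⟩ => ⟨⟨q, π, h⟩, rfl⟩⟩
    rintro ⟨q, π, h⟩ ⟨q', π', h'⟩ he
    obtain rfl : π = π' := congrArg Subtype.val he
    obtain rfl := hunique π q q' h h'
    rfl
  rw [← Nat.card_eq_of_bijective _ hbij, Nat.card_sigma]
  simp only [Perm.card_forall_apply_eq (hf _) (hg _), Finset.sum_const, Finset.card_univ,
    smul_eq_mul]

end PermCount

section Pattern

variable {n i : ℕ}

theorem pval_succ (π : Perm (Fin n)) {k : ℕ} (hk : k < n) :
    pval n π (k + 1) = π ⟨k, hk⟩ + 1 := by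
  simp [pval, hk]

theorem pval_of_lt (π : Perm (Fin n)) {k : ℕ} (hk : n < k) : pval n π k = n + 1 := by
  simp [pval]
  omega

/- Everything is 0-indexed here: the occurrence at 1-indexed position `t = p + 1` reads
`i - 1, i, x` as values of `π : Perm (Fin n)`. -/
def patternPositions (p : Fin (n - 2)) : Fin 3 → Fin n :=
  ![⟨p, by omega⟩, ⟨p + 1, by omega⟩, ⟨p + 2, by omega⟩]

def patternValues (hi : i < n) (x : Fin (i - 1)) : Fin 3 → Fin n :=
  ![⟨i - 1, by omega⟩, ⟨i, hi⟩, ⟨x, by omega⟩]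

theorem patternPositions_injective (p : Fin (n - 2)) : Injective (patternPositions p) := by
  intro a b h
  fin_cases a <;> fin_cases b <;> simp_all [patternPositions, Fin.ext_iff]

theorem patternValues_injective (hi : i < n) (x : Fin (i - 1)) :
    Injective (patternValues hi x) := by
  intro a b h
  have := x.isLt
  fin_cases a <;> fin_cases b <;> simp [patternValues, Fin.ext_iff] at h ⊢ <;> omega

theorem forall_apply_patternPositions_iff (π : Perm (Fin n)) (hi : i < n) (p : Fin (n - 2))
    (x : Fin (i - 1)) :
    (∀ j, π (patternPositions p j) = patternValues hi x j) ↔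
      (π ⟨p, by omega⟩ : ℕ) = i - 1 ∧ (π ⟨(p : ℕ) + 1, by omega⟩ : ℕ) = i ∧
        (π ⟨(p : ℕ) + 2, by omega⟩ : ℕ) = x := by
  simp [Fin.forall_fin_succ, patternPositions, patternValues, Fin.ext_iff]

theorem exists_pattern_iff (hi : i < n) (π : Perm (Fin n)) :
    (∃ t, 1 ≤ t ∧ t + 1 ≤ n ∧ pval n π t = i ∧ pval n π (t + 1) = i + 1 ∧
        pval n π (t + 2) < i + 1) ↔
      ∃ q : Fin (n - 2) × Fin (i - 1),
        ∀ j, π (patternPositions q.1 j) = patternValues hi q.2 j := by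
  constructor
  · rintro ⟨t, ht, htn, hfirst, hsecond, hthird⟩
    obtain ⟨p, rfl⟩ : ∃ p, t = p + 1 := ⟨t - 1, by omega⟩
    rw [pval_succ π (by omega : p < n)] at hfirst
    rw [pval_succ π (by omega : p + 1 < n)] at hsecond
    replace hfirst := Nat.eq_sub_of_add_eq hfirst
    replace hsecond := Nat.add_right_cancel hsecond
    have hp : p + 2 < n := by
      by_contra hp
      rw [pval_of_lt π (by omega)] at hthird
      omega
    rw [show p + 1 + 2 = p + 2 + 1 from rfl, pval_succ π hp] at hthird
    have hne : (π ⟨p + 2, hp⟩ : ℕ) ≠ i - 1 := fun h => by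
      simpa using π.injective (Fin.ext (h.trans hfirst.symm))
    exact ⟨(⟨p, by omega⟩, ⟨π ⟨p + 2, hp⟩, by omega⟩),
      (forall_apply_patternPositions_iff π hi _ _).2 ⟨hfirst, hsecond, rfl⟩⟩
  · rintro ⟨⟨p, x⟩, h⟩
    obtain ⟨hfirst, hsecond, hthird⟩ := (forall_apply_patternPositions_iff π hi p x).1 h
    have := x.isLt
    refine ⟨p + 1, by omega, by omega, ?_, ?_, ?_⟩
    · rw [pval_succ π (by omega), hfirst]
      omega
    · rw [pval_succ π (by omega), hsecond]
    · rw [show (p : ℕ) + 1 + 2 = p + 2 + 1 from rfl, pval_succ π (by omega), hthird]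
      omega

theorem pattern_occurrence_unique (hi : i < n) (π : Perm (Fin n))
    (q q' : Fin (n - 2) × Fin (i - 1))
    (h : ∀ j, π (patternPositions q.1 j) = patternValues hi q.2 j)
    (h' : ∀ j, π (patternPositions q'.1 j) = patternValues hi q'.2 j) : q = q' := by
  obtain ⟨p, x⟩ := q
  obtain ⟨p', x'⟩ := q'
  obtain ⟨hfirst, -, hthird⟩ := (forall_apply_patternPositions_iff π hi _ _).1 h
  obtain ⟨hfirst', -, hthird'⟩ := (forall_apply_patternPositions_iff π hi _ _).1 h'
  obtain rfl : p = p' := by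
    simpa [Fin.ext_iff] using π.injective (Fin.ext (hfirst.trans hfirst'.symm))
  obtain rfl : x = x' := Fin.ext (hthird.symm.trans hthird')
  rfl

end Pattern

theorem stmt19_general (n i : ℕ) (hi1 : 1 ≤ i) (hi2 : i ≤ n - 1) :
    Nat.card {π : Equiv.Perm (Fin n) //
      ∃ t, 1 ≤ t ∧ t + 1 ≤ n ∧ pval n π t = i ∧ pval n π (t + 1) = i + 1 ∧
        pval n π (t + 2) < i + 1} =
    (i - 1) * Nat.factorial (n - 2) := by
  have hi : i < n := by omega
  rw [Nat.card_congr (Equiv.subtypeEquivRight (exists_pattern_iff hi))]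
  refine (Perm.card_exists_forall_apply_eq (κ := Fin (n - 2) × Fin (i - 1))
    (fun q => patternPositions_injective q.1) (fun q => patternValues_injective hi q.2)
    (pattern_occurrence_unique hi)).trans ?_
  simp only [Fintype.card_prod, Fintype.card_fin]
  rcases Nat.eq_zero_or_pos (n - 2) with h | h
  · simp [h]
    omega
  · rw [show n - 3 = n - 2 - 1 by omega, mul_comm (n - 2), mul_assoc, Nat.mul_factorial_pred h.ne']

theorem stmt19 (n i : ℕ) (hn : 2 ≤ n) (hi1 : 1 ≤ i) (hi2 : i ≤ n - 1) :
    Nat.card {π : Equiv.Perm (Fin n) //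
      ∃ t, 1 ≤ t ∧ t + 1 ≤ n ∧ pval n π t = i ∧ pval n π (t + 1) = i + 1 ∧
        pval n π (t + 2) < i + 1} =
    (i - 1) * Nat.factorial (n - 2) :=
  stmt19_general n i hi1 hi2
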